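/- arXiv:2410.10401 — 3 statements merged into one kernel-verified Lean document; each statement's English description precedes it below -/
import Mathlib

section
/- For a torsion group G, the power graph of G equals the enhanced power graph of G if and only if G has no subgroup isomorphic to C_p × C_q for distinct primes p and q. -/
/-!
Every edge of the power graph is an edge of the enhanced power graph. Conversely, in a torsion
group an edge `x ~ y` of the enhanced power graph lies in a finite cyclic group `⟨z⟩`, and there
`x` is a power of `y` exactly when `orderOf x ∣ orderOf y`. So the two graphs differ iff some
`⟨z⟩` contains two elements whose orders do not divide each other, i.e. iff some `orderOf z` has
two distinct prime factors `p, q`, i.e. iff `G` has an element of order `p * q`. Finally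
`C_p × C_q ≅ C_{pq}` by the Chinese remainder theorem.
-/

open Subgroup

/-- The power graph of a group: `x ~ y` iff `x ≠ y` and one is a power of the other. -/
def powGraph (G : Type*) [Group G] : SimpleGraph G where
  Adj x y := x ≠ y ∧ (x ∈ zpowers y ∨ y ∈ zpowers x)
  symm := by constructor; rintro x y ⟨h1, h2⟩; exact ⟨h1.symm, h2.symm⟩
  loopless := by constructor; rintro x ⟨h1, _⟩; exact h1 rfl

/-- The enhanced power graph: `x ~ y` iff `x ≠ y` and `⟨x, y⟩` is cyclic. -/
def epowGraph (G : Type*) [Group G] : SimpleGraph G where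
  Adj x y := x ≠ y ∧ IsCyclic (closure ({x, y} : Set G))
  symm := by
    constructor
    rintro x y ⟨h1, h2⟩
    refine ⟨h1.symm, ?_⟩
    rwa [Set.pair_comm y x]
  loopless := by constructor; rintro x ⟨h1, _⟩; exact h1 rfl

/-- The commuting graph: `x ~ y` iff `x ≠ y` and `x y = y x`. -/
def comGraph (G : Type*) [Group G] : SimpleGraph G where
  Adj x y := x ≠ y ∧ x * y = y * x
  symm := by constructor; rintro x y ⟨h1, h2⟩; exact ⟨h1.symm, h2.symm⟩
  loopless := by constructor; rintro x ⟨h1, _⟩; exact h1 rfl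

/-- `G` has a subgroup isomorphic to `H`. -/
def HasSubgroupIso (G : Type*) [Group G] (H : Type*) [Group H] : Prop :=
  ∃ K : Subgroup G, Nonempty (K ≃* H)

theorem Nat.exists_primes_ne_dvd_of_not_dvd {a b : ℕ} (ha : a ≠ 0) (hb : b ≠ 0)
    (hab : ¬ a ∣ b) (hba : ¬ b ∣ a) :
    ∃ p q : ℕ, p.Prime ∧ q.Prime ∧ p ≠ q ∧ p ∣ a ∧ q ∣ b := by
  obtain ⟨p, hp, hpab⟩ : ∃ p, p.Prime ∧ b.factorization p < a.factorization p := by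
    simpa [← Nat.factorization_prime_le_iff_dvd ha hb] using hab
  obtain ⟨q, hq, hqba⟩ : ∃ q, q.Prime ∧ a.factorization q < b.factorization q := by
    simpa [← Nat.factorization_prime_le_iff_dvd hb ha] using hba
  refine ⟨p, q, hp, hq, ?_, Nat.dvd_of_factorization_pos (pos_of_gt hpab).ne',
    Nat.dvd_of_factorization_pos (pos_of_gt hqba).ne'⟩
  rintro rfl
  exact hpab.asymm hqba

theorem IsCyclic.mem_zpowers_iff_orderOf_dvd {α : Type*} [Group α] [Finite α] [IsCyclic α]
    {x y : α} : x ∈ zpowers y ↔ orderOf x ∣ orderOf y := by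
  refine ⟨orderOf_dvd_of_mem_zpowers, fun h => ?_⟩
  classical
  have := Fintype.ofFinite α
  -- `zpowers y` already supplies `orderOf y` solutions of `a ^ orderOf y = 1`, and a cyclic group
  -- has no more; `x` is one of them.
  set S : Finset α := Finset.univ.filter (· ^ orderOf y = 1)
  have hsub : (zpowers y : Set α).toFinset ⊆ S := fun a ha => by
    simpa [S, ← orderOf_dvd_iff_pow_eq_one] using orderOf_dvd_of_mem_zpowers (by simpa using ha)
  have hcard : S.card ≤ (zpowers y : Set α).toFinset.card := by
    rw [Set.toFinset_card, ← Nat.card_eq_fintype_card, SetLike.coe_sort_coe, Nat.card_zpowers]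
    exact IsCyclic.card_pow_eq_one_le (orderOf_pos y)
  have hx : x ∈ S := by simpa [S, ← orderOf_dvd_iff_pow_eq_one] using h
  simpa [← Finset.eq_of_subset_of_card_le hsub hcard] using hx

section

variable {G : Type*} [Group G]

theorem isCyclic_closure_pair_iff {x y : G} :
    IsCyclic (closure ({x, y} : Set G)) ↔ ∃ z : G, x ∈ zpowers z ∧ y ∈ zpowers z := by
  refine ⟨fun h => ?_, fun ⟨z, hx, hy⟩ =>
    isCyclic_of_le ((closure_le _).mpr (Set.pair_subset hx hy))⟩
  obtain ⟨z, hz⟩ := (closure ({x, y} : Set G)).isCyclic_iff_exists_zpowers_eq_top.mp h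
  exact ⟨z, Set.pair_subset_iff.mp (hz ▸ subset_closure)⟩

theorem epowGraph_adj_iff {x y : G} :
    (epowGraph G).Adj x y ↔ x ≠ y ∧ ∃ z : G, x ∈ zpowers z ∧ y ∈ zpowers z :=
  and_congr_right' isCyclic_closure_pair_iff

theorem IsOfFinOrder.mem_zpowers_iff_orderOf_dvd {x y z : G} (hz : IsOfFinOrder z)
    (hx : x ∈ zpowers z) (hy : y ∈ zpowers z) : x ∈ zpowers y ↔ orderOf x ∣ orderOf y := by
  have : Finite (zpowers z) := (finite_zpowers.mpr hz).to_subtype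
  have := IsCyclic.mem_zpowers_iff_orderOf_dvd (x := (⟨x, hx⟩ : zpowers z)) (y := ⟨y, hy⟩)
  simpa [mem_zpowers_iff, Subtype.ext_iff] using this

theorem powGraph_adj_iff_epowGraph_adj_and_dvd (htor : ∀ g : G, IsOfFinOrder g) {x y : G} :
    (powGraph G).Adj x y ↔
      (epowGraph G).Adj x y ∧ (orderOf x ∣ orderOf y ∨ orderOf y ∣ orderOf x) := by
  rw [epowGraph_adj_iff]
  constructor
  · rintro ⟨hxy, hx | hy⟩
    · exact ⟨⟨hxy, y, hx, mem_zpowers y⟩, .inl (orderOf_dvd_of_mem_zpowers hx)⟩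
    · exact ⟨⟨hxy, x, mem_zpowers x, hy⟩, .inr (orderOf_dvd_of_mem_zpowers hy)⟩
  · rintro ⟨⟨hxy, z, hx, hy⟩, hdvd⟩
    exact ⟨hxy, hdvd.imp ((htor z).mem_zpowers_iff_orderOf_dvd hx hy).mpr
      ((htor z).mem_zpowers_iff_orderOf_dvd hy hx).mpr⟩

theorem powGraph_eq_epowGraph_iff (htor : ∀ g : G, IsOfFinOrder g) :
    powGraph G = epowGraph G ↔ ∀ x y : G, (epowGraph G).Adj x y →
      orderOf x ∣ orderOf y ∨ orderOf y ∣ orderOf x := by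
  simp only [SimpleGraph.ext_iff, funext_iff, eq_iff_iff,
    powGraph_adj_iff_epowGraph_adj_and_dvd htor, and_iff_left_iff_imp]

theorem exists_epowGraph_adj_not_dvd_of_orderOf_eq_mul {p q : ℕ} (hp : p.Prime) (hq : q.Prime)
    (hpq : p ≠ q) {g : G} (hg : orderOf g = p * q) :
    ∃ x y : G, (epowGraph G).Adj x y ∧ ¬ (orderOf x ∣ orderOf y ∨ orderOf y ∣ orderOf x) := by
  have hg0 : orderOf g ≠ 0 := hg ▸ mul_ne_zero hp.ne_zero hq.ne_zero
  have hx : orderOf (g ^ (orderOf g / p)) = p :=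
    orderOf_pow_orderOf_div hg0 (hg ▸ dvd_mul_right p q)
  have hy : orderOf (g ^ (orderOf g / q)) = q :=
    orderOf_pow_orderOf_div hg0 (hg ▸ dvd_mul_left q p)
  have hxy : g ^ (orderOf g / p) ≠ g ^ (orderOf g / q) :=
    fun h => hpq (hx ▸ hy ▸ congrArg orderOf h)
  refine ⟨_, _, epowGraph_adj_iff.mpr ⟨hxy, g, npow_mem_zpowers _ _, npow_mem_zpowers _ _⟩, ?_⟩
  rw [hx, hy, Nat.prime_dvd_prime_iff_eq hp hq, Nat.prime_dvd_prime_iff_eq hq hp]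
  exact fun h => h.elim hpq (Ne.symm hpq)

theorem exists_orderOf_eq_mul_of_epowGraph_adj (htor : ∀ g : G, IsOfFinOrder g) {x y : G}
    (hadj : (epowGraph G).Adj x y) (hdvd : ¬ (orderOf x ∣ orderOf y ∨ orderOf y ∣ orderOf x)) :
    ∃ p q : ℕ, p.Prime ∧ q.Prime ∧ p ≠ q ∧ ∃ g : G, orderOf g = p * q := by
  obtain ⟨-, z, hx, hy⟩ := epowGraph_adj_iff.mp hadj
  rw [not_or] at hdvd
  obtain ⟨p, q, hp, hq, hpq, hpx, hqy⟩ := Nat.exists_primes_ne_dvd_of_not_dvd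
    (htor x).orderOf_pos.ne' (htor y).orderOf_pos.ne' hdvd.1 hdvd.2
  have hpqz : p * q ∣ orderOf z := ((Nat.coprime_primes hp hq).mpr hpq).mul_dvd_of_dvd_of_dvd
    (hpx.trans (orderOf_dvd_of_mem_zpowers hx)) (hqy.trans (orderOf_dvd_of_mem_zpowers hy))
  exact ⟨p, q, hp, hq, hpq, _, orderOf_pow_orderOf_div (htor z).orderOf_pos.ne' hpqz⟩

theorem powGraph_eq_epowGraph_iff_not_exists_orderOf_eq_mul (htor : ∀ g : G, IsOfFinOrder g) :
    powGraph G = epowGraph G ↔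
      ¬ ∃ p q : ℕ, p.Prime ∧ q.Prime ∧ p ≠ q ∧ ∃ g : G, orderOf g = p * q := by
  rw [powGraph_eq_epowGraph_iff htor]
  constructor
  · rintro h ⟨p, q, hp, hq, hpq, g, hg⟩
    obtain ⟨x, y, hadj, hdvd⟩ := exists_epowGraph_adj_not_dvd_of_orderOf_eq_mul hp hq hpq hg
    exact hdvd (h x y hadj)
  · intro h x y hadj
    by_contra hdvd
    exact h (exists_orderOf_eq_mul_of_epowGraph_adj htor hadj hdvd)

theorem hasSubgroupIso_congr_right {H H' : Type*} [Group H] [Group H'] (e : H ≃* H') :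
    HasSubgroupIso G H ↔ HasSubgroupIso G H' :=
  exists_congr fun _ => ⟨fun ⟨f⟩ => ⟨f.trans e⟩, fun ⟨f⟩ => ⟨f.trans e.symm⟩⟩

theorem hasSubgroupIso_multiplicative_zmod_iff {n : ℕ} (hn : n ≠ 0) :
    HasSubgroupIso G (Multiplicative (ZMod n)) ↔ ∃ g : G, orderOf g = n := by
  have : NeZero n := ⟨hn⟩
  constructor
  · rintro ⟨K, ⟨e⟩⟩
    refine ⟨e.symm (Multiplicative.ofAdd 1), ?_⟩
    rw [orderOf_coe, e.symm.orderOf_eq, orderOf_ofAdd_eq_addOrderOf, ZMod.addOrderOf_one]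
  · rintro ⟨g, rfl⟩
    exact ⟨zpowers g, ⟨mulEquivOfCyclicCardEq (by simp [Nat.card_zpowers])⟩⟩

theorem hasSubgroupIso_zmod_prod_iff {p q : ℕ} (hpq : p.Coprime q) (hp : p ≠ 0) (hq : q ≠ 0) :
    HasSubgroupIso G (Multiplicative (ZMod p × ZMod q)) ↔ ∃ g : G, orderOf g = p * q := by
  rw [← hasSubgroupIso_congr_right (ZMod.chineseRemainder hpq).toAddEquiv.toMultiplicative,
    hasSubgroupIso_multiplicative_zmod_iff (mul_ne_zero hp hq)]

end

theorem torsion_powGraph_eq_epowGraph_iff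
    {G : Type*} [Group G] (htor : ∀ g : G, IsOfFinOrder g) :
    powGraph G = epowGraph G ↔
      ¬ ∃ p q : ℕ, p.Prime ∧ q.Prime ∧ p ≠ q ∧
        HasSubgroupIso G (Multiplicative (ZMod p × ZMod q)) := by
  rw [powGraph_eq_epowGraph_iff_not_exists_orderOf_eq_mul htor]
  refine not_congr (exists₂_congr fun p q => and_congr_right fun hp => and_congr_right fun hq =>
    and_congr_right fun hpq => ?_)
  exact (hasSubgroupIso_zmod_prod_iff ((Nat.coprime_primes hp hq).mpr hpq)
    hp.ne_zero hq.ne_zero).symm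
end

section
/- The enhanced power graph and the commuting graph of a group G are equal if and only if G does not have a subgroup isomorphic to ℤ × ℤ, ℤ × C_p, or C_p × C_p for any prime p. -/
open Subgroup

/-!
Cyclic groups are abelian, so `epowGraph G ≤ comGraph G`, with equality iff any two commuting
elements generate a cyclic group. Such a subgroup `⟨x, y⟩` is a finitely generated abelian group,
hence a product `Π i, ZMod (m i)`, where the factors with `m i = 0` (recall `ZMod 0 = ℤ`) make up
the free part. By the Chinese remainder theorem the product is cyclic if the `m i` are pairwise
coprime; otherwise two factors with `¬ (m i).Coprime (m j)` give a subgroup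
`ZMod (m i) × ZMod (m j)`, which contains `ℤ × ℤ`, `ℤ × C_p` or `C_p × C_p`. Conversely, each of
these three groups is `ZMod u × ZMod v` with `¬ u.Coprime v`, so it is not cyclic, yet it is
generated by the two commuting elements `(1, 0)` and `(0, 1)`.
-/

theorem hasSubgroupIso_iff_exists_injective {G H : Type*} [Group G] [Group H] :
    HasSubgroupIso G H ↔ ∃ f : H →* G, Function.Injective f :=
  ⟨fun ⟨K, ⟨e⟩⟩ => ⟨K.subtype.comp e.symm.toMonoidHom, K.subtype_injective.comp e.symm.injective⟩,
    fun ⟨f, hf⟩ => ⟨f.range, ⟨(MonoidHom.ofInjective hf).symm⟩⟩⟩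

theorem hasSubgroupIso_of_injective {G H : Type*} [Group G] [Group H] (f : H →* G)
    (hf : Function.Injective f) : HasSubgroupIso G H :=
  hasSubgroupIso_iff_exists_injective.mpr ⟨f, hf⟩

theorem HasSubgroupIso.trans {G H K : Type*} [Group G] [Group H] [Group K]
    (hGH : HasSubgroupIso G H) (hHK : HasSubgroupIso H K) : HasSubgroupIso G K := by
  obtain ⟨f, hf⟩ := hasSubgroupIso_iff_exists_injective.mp hGH
  obtain ⟨g, hg⟩ := hasSubgroupIso_iff_exists_injective.mp hHK
  exact hasSubgroupIso_of_injective (f.comp g) (hf.comp hg)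

theorem HasSubgroupIso.prod_comm {G A B : Type*} [Group G] [AddGroup A] [AddGroup B]
    (h : HasSubgroupIso G (Multiplicative (A × B))) : HasSubgroupIso G (Multiplicative (B × A)) :=
  let e : Multiplicative (B × A) ≃* Multiplicative (A × B) :=
    AddEquiv.toMultiplicative (AddEquiv.prodComm)
  h.trans (hasSubgroupIso_of_injective e.toMonoidHom e.injective)

theorem ZMod.exists_injective_addMonoidHom_mul (a : ℕ) {c : ℕ} (hc : c ≠ 0) :
    ∃ f : ZMod a →+ ZMod (a * c), Function.Injective f := by
  have hker : zmultiplesHom (ZMod (a * c)) (c : ZMod (a * c)) a = 0 := by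
    simp [← Nat.cast_mul]
  refine ⟨ZMod.lift a ⟨_, hker⟩, (injective_iff_map_eq_zero _).mpr fun x hx => ?_⟩
  obtain ⟨k, rfl⟩ := ZMod.intCast_surjective x
  rw [ZMod.lift_coe, zmultiplesHom_apply, zsmul_eq_mul, ← Int.cast_natCast c, ← Int.cast_mul,
    ZMod.intCast_zmod_eq_zero_iff_dvd, Nat.cast_mul] at hx
  rw [ZMod.intCast_zmod_eq_zero_iff_dvd]
  exact (mul_dvd_mul_iff_right (by exact_mod_cast hc)).mp hx

theorem HasSubgroupIso.of_zmod_prod_mul {G : Type*} [Group G] {a b c d : ℕ} (hc : c ≠ 0)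
    (hd : d ≠ 0) (h : HasSubgroupIso G (Multiplicative (ZMod (a * c) × ZMod (b * d)))) :
    HasSubgroupIso G (Multiplicative (ZMod a × ZMod b)) := by
  obtain ⟨f, hf⟩ := ZMod.exists_injective_addMonoidHom_mul a hc
  obtain ⟨g, hg⟩ := ZMod.exists_injective_addMonoidHom_mul b hd
  exact h.trans (hasSubgroupIso_of_injective (f.prodMap g).toMultiplicative
    (Prod.map_injective.mpr ⟨hf, hg⟩))

theorem exists_not_coprime_hasSubgroupIso_zmod_prod_iff {G : Type*} [Group G] :
    (∃ u v : ℕ, ¬ u.Coprime v ∧ HasSubgroupIso G (Multiplicative (ZMod u × ZMod v))) ↔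
      HasSubgroupIso G (Multiplicative (ℤ × ℤ)) ∨ ∃ p : ℕ, p.Prime ∧
        (HasSubgroupIso G (Multiplicative (ℤ × ZMod p)) ∨
          HasSubgroupIso G (Multiplicative (ZMod p × ZMod p))) := by
  constructor
  · rintro ⟨u, v, huv, h⟩
    wlog hu : u = 0 ∨ v ≠ 0 generalizing u v
    · push Not at hu
      exact this v u (fun h' => huv h'.symm) h.prod_comm (Or.inl hu.2)
    rcases eq_or_ne u 0 with rfl | hu0
    · rcases eq_or_ne v 0 with rfl | hv0
      · exact Or.inl h
      · obtain ⟨c, hc⟩ := v.minFac_dvd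
        have hc0 : c ≠ 0 := by rintro rfl; exact hv0 (by simpa using hc)
        rw [hc] at h
        exact Or.inr ⟨_, Nat.minFac_prime (by simpa using huv), Or.inl
          (HasSubgroupIso.of_zmod_prod_mul (a := 0) (c := 1) one_ne_zero hc0 h)⟩
    · have hv0 := hu.resolve_left hu0
      set p := (u.gcd v).minFac
      have hp : p.Prime := Nat.minFac_prime huv
      obtain ⟨c, hc⟩ : p ∣ u := (Nat.minFac_dvd _).trans (u.gcd_dvd_left v)
      obtain ⟨d, hd⟩ : p ∣ v := (Nat.minFac_dvd _).trans (u.gcd_dvd_right v)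
      have hc0 : c ≠ 0 := by rintro rfl; exact hu0 (by simpa using hc)
      have hd0 : d ≠ 0 := by rintro rfl; exact hv0 (by simpa using hd)
      rw [hc, hd] at h
      exact Or.inr ⟨p, hp, Or.inr (HasSubgroupIso.of_zmod_prod_mul hc0 hd0 h)⟩
  · rintro (h | ⟨p, hp, h | h⟩)
    · exact ⟨0, 0, Nat.not_coprime_zero_zero, h⟩
    · exact ⟨0, p, by simpa using hp.ne_one, h⟩
    · exact ⟨p, p, by simpa using hp.ne_one, h⟩

theorem not_isAddCyclic_zmod_prod {u v : ℕ} (h : ¬ u.Coprime v) :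
    ¬ IsAddCyclic (ZMod u × ZMod v) := by
  simp [AddGroup.isAddCyclic_prod_iff, Nat.card_zmod, h]

theorem closure_ofAdd_zmod_prod_eq_top (u v : ℕ) :
    Subgroup.closure
      {Multiplicative.ofAdd ((1, 0) : ZMod u × ZMod v), Multiplicative.ofAdd (0, 1)} = ⊤ := by
  refine eq_top_iff.mpr fun q _ => ?_
  obtain ⟨k, hk⟩ := ZMod.intCast_surjective q.toAdd.1
  obtain ⟨l, hl⟩ := ZMod.intCast_surjective q.toAdd.2
  have hq : q = Multiplicative.ofAdd ((1, 0) : ZMod u × ZMod v) ^ k *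
      Multiplicative.ofAdd (0, 1) ^ l := by
    apply Multiplicative.toAdd.injective
    ext <;> simp [hk, hl]
  rw [hq]
  exact mul_mem (zpow_mem (subset_closure (by simp)) k) (zpow_mem (subset_closure (by simp)) l)

theorem exists_commute_not_isCyclic_closure_of_injective {G H : Type*} [Group G] [CommGroup H]
    {a b : H} (hab : closure {a, b} = ⊤) (hH : ¬ IsCyclic H) (f : H →* G)
    (hf : Function.Injective f) : ∃ x y : G, Commute x y ∧ ¬ IsCyclic (closure {x, y}) := by
  refine ⟨f a, f b, (Commute.all a b).map f, ?_⟩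
  rwa [← Set.image_pair, ← MonoidHom.map_closure, hab, ← MonoidHom.range_eq_map,
    ← (MonoidHom.ofInjective hf).isCyclic]

theorem ZMod.isAddCyclic_pi {ι : Type*} [Fintype ι] (m : ι → ℕ)
    (hm : Pairwise fun i j => (m i).Coprime (m j)) : IsAddCyclic (Π i, ZMod (m i)) :=
  (ZMod.prodEquivPi m hm).toAddEquiv.isAddCyclic.mp inferInstance

theorem AddCommGroup.exists_addEquiv_pi_zmod (A : Type*) [AddCommGroup A] [AddGroup.FG A] :
    ∃ (ι : Type) (_ : Fintype ι) (m : ι → ℕ), Nonempty (A ≃+ Π i, ZMod (m i)) := by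
  obtain ⟨n, ι, _, p, -, e, ⟨f⟩⟩ := AddCommGroup.equiv_free_prod_directSum_zmod A
  refine ⟨Fin n ⊕ ι, inferInstance, Sum.elim (fun _ => 0) (fun i => p i ^ e i), ⟨?_⟩⟩
  exact f.trans ((Finsupp.addEquivFunOnFinite.prodCongr (DirectSum.addEquivProd _)).trans
    (LinearEquiv.sumPiEquivProdPi ℤ _ _ _).toAddEquiv.symm)

theorem Pi.injective_single_coprod_single {ι : Type*} [DecidableEq ι] {β : ι → Type*}
    [∀ i, AddCommGroup (β i)] {i j : ι} (hij : i ≠ j) :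
    Function.Injective ((AddMonoidHom.single β i).coprod (AddMonoidHom.single β j)) := by
  rintro ⟨a, b⟩ ⟨a', b'⟩ h
  have hi := congr_fun h i
  have hj := congr_fun h j
  simp_all [hij.symm]

open scoped IsMulCommutative in
theorem exists_not_coprime_hasSubgroupIso_zmod_prod {A : Type*} [Group A] [IsMulCommutative A]
    [Group.FG A] (hA : ¬ IsCyclic A) :
    ∃ u v : ℕ, ¬ u.Coprime v ∧ HasSubgroupIso A (Multiplicative (ZMod u × ZMod v)) := by
  classical
  obtain ⟨ι, _, m, ⟨e⟩⟩ := AddCommGroup.exists_addEquiv_pi_zmod (Additive A)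
  obtain ⟨i, j, hij, hm⟩ : ∃ i j, i ≠ j ∧ ¬ (m i).Coprime (m j) := by
    by_contra! h
    rw [← isAddCyclic_additive_iff, e.isAddCyclic] at hA
    exact hA (ZMod.isAddCyclic_pi m h)
  refine ⟨m i, m j, hm, hasSubgroupIso_of_injective
    (AddMonoidHom.toMultiplicative (e.symm.toAddMonoidHom.comp
      ((AddMonoidHom.single (fun k => ZMod (m k)) i).coprod (AddMonoidHom.single _ j)))) ?_⟩
  exact e.symm.injective.comp (Pi.injective_single_coprod_single (β := fun k => ZMod (m k)) hij)

theorem exists_commute_not_isCyclic_closure_iff {G : Type*} [Group G] :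
    (∃ x y : G, Commute x y ∧ ¬ IsCyclic (closure {x, y})) ↔
      ∃ u v : ℕ, ¬ u.Coprime v ∧ HasSubgroupIso G (Multiplicative (ZMod u × ZMod v)) := by
  constructor
  · rintro ⟨x, y, hxy, hcyc⟩
    have : IsMulCommutative (closure {x, y}) := isMulCommutative_closure <| by
      rintro a (rfl | rfl) b (rfl | rfl)
      exacts [rfl, hxy.eq, hxy.symm.eq, rfl]
    have : Group.FG (closure {x, y}) := Group.closure_finite_fg _
    obtain ⟨u, v, huv, h⟩ := exists_not_coprime_hasSubgroupIso_zmod_prod hcyc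
    exact ⟨u, v, huv, (hasSubgroupIso_of_injective _ (subtype_injective _)).trans h⟩
  · rintro ⟨u, v, huv, h⟩
    obtain ⟨f, hf⟩ := hasSubgroupIso_iff_exists_injective.mp h
    refine exists_commute_not_isCyclic_closure_of_injective (closure_ofAdd_zmod_prod_eq_top u v)
      ?_ f hf
    rw [isCyclic_multiplicative_iff]
    exact not_isAddCyclic_zmod_prod huv

theorem epowGraph_eq_comGraph_iff_forall_commute {G : Type*} [Group G] :
    epowGraph G = comGraph G ↔ ∀ x y : G, Commute x y → IsCyclic (closure {x, y}) := by
  constructor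
  · intro h x y hxy
    rcases eq_or_ne x y with rfl | hne
    · rw [Set.pair_eq_singleton, ← zpowers_eq_closure]
      infer_instance
    · have hadj : (comGraph G).Adj x y := ⟨hne, hxy⟩
      rw [← h] at hadj
      exact hadj.2
  · intro h
    ext x y
    refine ⟨fun ⟨hne, hcyc⟩ => ⟨hne, ?_⟩, fun ⟨hne, hxy⟩ => ⟨hne, h x y hxy⟩⟩
    exact congrArg Subtype.val (mul_comm' (⟨x, subset_closure (by simp)⟩ : closure {x, y})
      ⟨y, subset_closure (by simp)⟩)

theorem epowGraph_eq_comGraph_iff {G : Type*} [Group G] :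
    epowGraph G = comGraph G ↔
      ¬ (HasSubgroupIso G (Multiplicative (ℤ × ℤ)) ∨
        ∃ p : ℕ, p.Prime ∧
          (HasSubgroupIso G (Multiplicative (ℤ × ZMod p)) ∨
            HasSubgroupIso G (Multiplicative (ZMod p × ZMod p)))) := by
  rw [epowGraph_eq_comGraph_iff_forall_commute, ← exists_not_coprime_hasSubgroupIso_zmod_prod_iff,
    ← exists_commute_not_isCyclic_closure_iff]
  simp only [not_exists, not_and, not_not]
end

section
/- In the locally quaternion group Q_{2^∞}, the power graph, the enhanced power graph, and the commuting graph are all equal. -/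
open Subgroup

/-- The Prüfer 2-group, realised as the subgroup of `ℂˣ` of `2 ^ n`-th roots of unity. -/
def Prufer2 : Subgroup ℂˣ where
  carrier := {z | ∃ n : ℕ, z ^ (2 ^ n) = 1}
  one_mem' := ⟨0, one_pow _⟩
  inv_mem' := by rintro z ⟨n, hn⟩; exact ⟨n, by rw [inv_pow, hn, inv_one]⟩
  mul_mem' := by
    rintro z w ⟨n, hn⟩ ⟨m, hm⟩
    refine ⟨n + m, ?_⟩
    rw [mul_pow, pow_add, pow_mul, hn, one_pow, one_mul, mul_comm (2 ^ n) (2 ^ m),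
      pow_mul, hm, one_pow]

/-!
In any group the power graph is contained in the enhanced power graph, which is contained in the
commuting graph, so it suffices that commuting elements are powers of one another. In the Prüfer
group `C` any two elements are, as their orders are powers of `2`. Every other element of
`Q = C ∪ C x` has the form `c x`; it squares to `z` and inverts `C` by conjugation, so the only
elements of `C` commuting with it are those of order at most `2`, namely `1` and `z = (c x) ^ 2`.
Two commuting elements `c x` and `d x` therefore differ by `1` or `z`, which makes `d x` equal to
`c x` or `(c x) ^ 3`.
-/

open Subgroup

section Graphs

variable {G : Type*} [Group G]

lemma isCyclic_closure_pair_of_mem_zpowers {a b : G} (h : a ∈ zpowers b) :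
    IsCyclic (closure ({a, b} : Set G)) := by
  have hclosure : closure ({a, b} : Set G) = zpowers b :=
    le_antisymm (closure_le _ |>.mpr <| Set.insert_subset h <| by simp)
      (zpowers_le.mpr <| subset_closure <| by simp)
  rw [hclosure]
  infer_instance

lemma commute_of_isCyclic_closure_pair {a b : G} (h : IsCyclic (closure ({a, b} : Set G))) :
    Commute a b :=
  setLike_mul_comm (s := closure ({a, b} : Set G)) (subset_closure <| by simp)
    (subset_closure <| by simp)

lemma commute_of_mem_zpowers {a b : G} (h : a ∈ zpowers b) : Commute a b := by
  obtain ⟨k, rfl⟩ := mem_zpowers_iff.mp h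
  exact (Commute.refl b).zpow_left k

lemma powGraph_le_epowGraph : powGraph G ≤ epowGraph G := by
  rintro a b ⟨hne, h | h⟩
  · exact ⟨hne, isCyclic_closure_pair_of_mem_zpowers h⟩
  · exact ⟨hne, Set.pair_comm a b ▸ isCyclic_closure_pair_of_mem_zpowers h⟩

lemma epowGraph_le_comGraph : epowGraph G ≤ comGraph G :=
  fun _ _ ⟨hne, h⟩ ↦ ⟨hne, commute_of_isCyclic_closure_pair h⟩

lemma powGraph_eq_epowGraph_and_epowGraph_eq_comGraph
    (h : ∀ a b : G, Commute a b → a ∈ zpowers b ∨ b ∈ zpowers a) :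
    powGraph G = epowGraph G ∧ epowGraph G = comGraph G := by
  have hcom : comGraph G ≤ powGraph G := fun a b ⟨hne, hab⟩ ↦ ⟨hne, h a b hab⟩
  exact ⟨powGraph_le_epowGraph.antisymm (epowGraph_le_comGraph.trans hcom),
    epowGraph_le_comGraph.antisymm (hcom.trans powGraph_le_epowGraph)⟩

end Graphs

lemma MonoidHom.apply_mem_zpowers_iff {G H : Type*} [Group G] [Group H] {f : G →* H}
    (hf : Function.Injective f) {a b : G} : f a ∈ zpowers (f b) ↔ a ∈ zpowers b := by
  rw [← MonoidHom.map_zpowers, mem_map_iff_mem hf]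

lemma Units.mem_zpowers_of_orderOf_dvd {R : Type*} [CommRing R] [IsDomain R] {a b : Rˣ}
    (hb : orderOf b ≠ 0) (h : orderOf a ∣ orderOf b) : a ∈ zpowers b := by
  have : NeZero (orderOf b) := ⟨hb⟩
  rw [(IsPrimitiveRoot.orderOf b).zpowers_eq, mem_rootsOfUnity, ← orderOf_dvd_iff_pow_eq_one]
  exact h

lemma Prufer2.exists_orderOf_eq_two_pow (u : Prufer2) : ∃ i : ℕ, orderOf (u : ℂˣ) = 2 ^ i := by
  obtain ⟨n, hn⟩ := u.2
  obtain ⟨i, -, hi⟩ := (Nat.dvd_prime_pow Nat.prime_two).mp (orderOf_dvd_of_pow_eq_one hn)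
  exact ⟨i, hi⟩

lemma Prufer2.mem_zpowers_or_mem_zpowers (u v : Prufer2) : u ∈ zpowers v ∨ v ∈ zpowers u := by
  simp only [← (MonoidHom.apply_mem_zpowers_iff Prufer2.subtype_injective), coe_subtype]
  obtain ⟨i, hi⟩ := Prufer2.exists_orderOf_eq_two_pow u
  obtain ⟨j, hj⟩ := Prufer2.exists_orderOf_eq_two_pow v
  rcases le_total i j with h | h
  · refine .inl <| Units.mem_zpowers_of_orderOf_dvd ?_ ?_
    · rw [hj]; positivity
    · rw [hi, hj]; exact pow_dvd_pow 2 h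
  · refine .inr <| Units.mem_zpowers_of_orderOf_dvd ?_ ?_
    · rw [hi]; positivity
    · rw [hi, hj]; exact pow_dvd_pow 2 h

lemma Subgroup.mem_zpowers_or_mem_zpowers_of_mulEquiv {G H : Type*} [Group G] [Group H]
    {C : Subgroup G} (e : C ≃* H) (h : ∀ u v : H, u ∈ zpowers v ∨ v ∈ zpowers u) :
    ∀ a ∈ C, ∀ b ∈ C, a ∈ zpowers b ∨ b ∈ zpowers a := by
  intro a ha b hb
  have hmap : ∀ u v : H, u ∈ zpowers v → C.subtype (e.symm u) ∈ zpowers (C.subtype (e.symm v)) :=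
    fun u v huv ↦ (C.subtype.comp e.symm.toMonoidHom).map_zpowers v ▸ mem_map_of_mem _ huv
  simpa using (h (e ⟨a, ha⟩) (e ⟨b, hb⟩)).imp (hmap _ _) (hmap _ _)

section Dicyclic

variable {Q : Type*} [Group Q] {C : Subgroup Q} {x : Q}

lemma mem_or_exists_eq_mul_of_mem_closure (hsq : x ^ 2 ∈ C)
    (hnorm : ∀ c ∈ C, x * c * x⁻¹ ∈ C) {q : Q} (hq : q ∈ closure ((C : Set Q) ∪ {x})) :
    q ∈ C ∨ ∃ c ∈ C, q = c * x := by
  induction hq using closure_induction with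
  | mem q hq =>
    rcases hq with hq | rfl
    · exact .inl hq
    · exact .inr ⟨1, C.one_mem, (one_mul _).symm⟩
  | one => exact .inl C.one_mem
  | mul p q _ _ hp hq =>
    rcases hp with hp | ⟨c, hc, rfl⟩ <;> rcases hq with hq | ⟨d, hd, rfl⟩
    · exact .inl (C.mul_mem hp hq)
    · exact .inr ⟨p * d, C.mul_mem hp hd, by group⟩
    · exact .inr ⟨c * (x * q * x⁻¹), C.mul_mem hc (hnorm q hq), by group⟩
    · refine .inl ?_
      rw [show c * x * (d * x) = c * (x * d * x⁻¹) * x ^ 2 by group]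
      exact C.mul_mem (C.mul_mem hc (hnorm d hd)) hsq
  | inv p _ hp =>
    rcases hp with hp | ⟨c, hc, rfl⟩
    · exact .inl (C.inv_mem hp)
    · refine .inr ⟨x * ((x ^ 2)⁻¹ * c⁻¹) * x⁻¹,
        hnorm _ (C.mul_mem (C.inv_mem hsq) (C.inv_mem hc)), by group⟩

variable (hconj : ∀ c ∈ C, x⁻¹ * c * x = c⁻¹)
include hconj

lemma conj_eq_inv_of_inv_conj_eq_inv {c : Q} (hc : c ∈ C) : x * c * x⁻¹ = c⁻¹ := by
  have h := hconj c⁻¹ (C.inv_mem hc)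
  rw [inv_inv] at h
  nth_rw 1 [← h]
  group

lemma mul_sq_eq_sq {c : Q} (hc : c ∈ C) : (c * x) ^ 2 = x ^ 2 := by
  rw [sq, sq, show c * x * (c * x) = c * (x * c * x⁻¹) * (x * x) by group,
    conj_eq_inv_of_inv_conj_eq_inv hconj hc, mul_inv_cancel, one_mul]

lemma mem_zpowers_of_commute_mul (hcomm : ∀ a ∈ C, ∀ b ∈ C, Commute a b)
    (hzuniq : ∀ w ∈ C, orderOf w = 2 → w = x ^ 2) {a c : Q} (ha : a ∈ C) (hc : c ∈ C)
    (h : Commute a (c * x)) : a ∈ zpowers (c * x) := by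
  have hinv : a⁻¹ = a :=
    calc a⁻¹ = x⁻¹ * (c⁻¹ * a * c) * x := by rw [(hcomm c hc a ha).inv_mul_cancel, hconj a ha]
      _ = (c * x)⁻¹ * a * (c * x) := by group
      _ = a := h.symm.inv_mul_cancel
  rcases eq_or_ne a 1 with rfl | hne
  · exact one_mem _
  · have horder : orderOf a = 2 := orderOf_eq_prime (sq a ▸ inv_eq_iff_mul_eq_one.mp hinv) hne
    rw [hzuniq a ha horder, ← mul_sq_eq_sq hconj hc]
    exact npow_mem_zpowers _ 2

lemma mem_zpowers_or_mem_zpowers_of_commute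
    (hchain : ∀ a ∈ C, ∀ b ∈ C, a ∈ zpowers b ∨ b ∈ zpowers a) (hsq : x ^ 2 ∈ C)
    (hzuniq : ∀ w ∈ C, orderOf w = 2 → w = x ^ 2) (hgen : closure ((C : Set Q) ∪ {x}) = ⊤)
    {a b : Q} (h : Commute a b) : a ∈ zpowers b ∨ b ∈ zpowers a := by
  have hcomm : ∀ a ∈ C, ∀ b ∈ C, Commute a b := fun a ha b hb ↦
    (hchain a ha b hb).elim commute_of_mem_zpowers fun h ↦ (commute_of_mem_zpowers h).symm
  have hcases : ∀ q : Q, q ∈ C ∨ ∃ c ∈ C, q = c * x := fun q ↦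
    mem_or_exists_eq_mul_of_mem_closure hsq
      (fun c hc ↦ conj_eq_inv_of_inv_conj_eq_inv hconj hc ▸ C.inv_mem hc) (hgen ▸ mem_top q)
  rcases hcases a with ha | ⟨c, hc, rfl⟩ <;> rcases hcases b with hb | ⟨d, hd, rfl⟩
  · exact hchain a ha b hb
  · exact .inl (mem_zpowers_of_commute_mul hconj hcomm hzuniq ha hd h)
  · exact .inr (mem_zpowers_of_commute_mul hconj hcomm hzuniq hb hc h.symm)
  · have hdc : Commute (d * c⁻¹) (c * x) := by
      rw [show d * c⁻¹ = d * x * (c * x)⁻¹ by group]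
      exact h.symm.mul_left (Commute.refl _).inv_left
    refine .inr ?_
    rw [show d * x = d * c⁻¹ * (c * x) by group]
    exact mul_mem (mem_zpowers_of_commute_mul hconj hcomm hzuniq
      (C.mul_mem hd (C.inv_mem hc)) hc hdc) (mem_zpowers _)

end Dicyclic

theorem locally_quaternion_graphs_eq_general
    {Q : Type*} [Group Q] (C : Subgroup Q) (hC : Nonempty (C ≃* Prufer2))
    (x z : Q) (hzC : z ∈ C)
    (hzuniq : ∀ w ∈ C, orderOf w = 2 → w = z)
    (hx : x ^ 2 = z) (hconj : ∀ c ∈ C, x⁻¹ * c * x = c⁻¹)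
    (hgen : Subgroup.closure ((C : Set Q) ∪ {x}) = ⊤) :
    powGraph Q = epowGraph Q ∧ epowGraph Q = comGraph Q := by
  subst hx
  obtain ⟨e⟩ := hC
  have hchain := C.mem_zpowers_or_mem_zpowers_of_mulEquiv e Prufer2.mem_zpowers_or_mem_zpowers
  exact powGraph_eq_epowGraph_and_epowGraph_eq_comGraph fun _ _ ↦
    mem_zpowers_or_mem_zpowers_of_commute hconj hchain hzC hzuniq hgen

/-- For the locally quaternion group `Q_{2^∞}` (presented as generated by a copy `C` of the
Prüfer 2-group and an element `x` with `x⁻¹ c x = c⁻¹` and `x ^ 2 = z`, the unique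
element of order 2 of `C`), the power, enhanced power and commuting graphs coincide. -/
theorem locally_quaternion_graphs_eq
    {Q : Type*} [Group Q] (C : Subgroup Q) (hC : Nonempty (C ≃* Prufer2))
    (x z : Q) (hzC : z ∈ C) (hz : orderOf z = 2)
    (hzuniq : ∀ w ∈ C, orderOf w = 2 → w = z)
    (hx : x ^ 2 = z) (hconj : ∀ c ∈ C, x⁻¹ * c * x = c⁻¹)
    (hgen : Subgroup.closure ((C : Set Q) ∪ {x}) = ⊤) :
    powGraph Q = epowGraph Q ∧ epowGraph Q = comGraph Q :=
  locally_quaternion_graphs_eq_general C hC x z hzC hzuniq hx hconj hgen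
end
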